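/- Let G be a finite group with trivial center and n0 ≥ 3 an integer such that l^i(D1,…,Dn) ≥ 1 for every n with n0 ≤ n ≤ 2·n0−1 and every choice of nontrivial conjugacy classes D1,…,Dn of G. Then for every m of the form m = k·n0 + l with k ≥ 2 and 0 ≤ l ≤ n0−1, and every choice of nontrivial conjugacy classes C1,…,Cm of G, one has l^i(C1,…,Cm) ≥ |G|^{k−1}. -/

import Mathlib

namespace ClassVectors

variable {G : Type*} [Group G]

/-- Simultaneous conjugacy of `m`-tuples. -/
def SimConjT {G : Type*} [Group G] {m : ℕ} (σ τ : Fin m → G) : Prop :=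
  ∃ γ : G, ∀ i, γ⁻¹ * σ i * γ = τ i

/-- `C` is a nontrivial conjugacy class of `G`. -/
def IsNontrivialConjClass {G : Type*} [Group G] (C : Set G) : Prop :=
  ∃ g : G, g ≠ 1 ∧ C = {x | IsConj g x}

/-- `Σ(C₁,…,C_m)`: the set of `m`-tuples with `σᵢ ∈ Cᵢ`, product `1`
(in order `σ₀ σ₁ ⋯ σ_{m-1}`), generating `G`. -/
def GenSystems (G : Type*) [Group G] (m : ℕ) (C : Fin m → Set G) :
    Set (Fin m → G) :=
  {σ | (∀ i, σ i ∈ C i) ∧ (List.ofFn σ).prod = 1 ∧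
    Subgroup.closure (Set.range σ) = ⊤}

/-- `l^i(C₁,…,C_m)`: the number of simultaneous conjugacy classes of
generating systems in `Σ(C₁,…,C_m)`. -/
noncomputable def li (G : Type*) [Group G] (m : ℕ) (C : Fin m → Set G) : ℕ :=
  Nat.card (Quot (fun σ τ : GenSystems G m C => SimConjT σ.1 τ.1))

end ClassVectors

/-!
Fix `τ ∈ Σ(C₁,…,C_{n₀})`, which exists by hypothesis. The map `(γ, [β]) ↦ [(τ^γ, β)]`
from `G × Σ^i(C_{n₀+1},…,C_m)` to `Σ^i(C₁,…,C_m)` is injective: an element conjugating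
a generating tuple to itself is central, hence trivial. So each block of `n₀` classes
split off multiplies `l^i` by at least `|G|`, and after `k - 1` splits the remaining
length lies in `[n₀, 2n₀ - 1]`, where `l^i ≥ 1` by hypothesis.
-/

namespace ClassVectors

variable {G : Type*} [Group G]

theorem simConjT_equivalence (m : ℕ) : Equivalence (@SimConjT G _ m) where
  refl _ := ⟨1, by simp⟩
  symm := by
    rintro σ τ ⟨γ, h⟩
    exact ⟨γ⁻¹, fun i => by rw [← h i]; group⟩
  trans := by
    rintro σ τ ρ ⟨γ, h⟩ ⟨δ, h'⟩
    exact ⟨γ * δ, fun i => by rw [← h' i, ← h i]; group⟩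

theorem IsNontrivialConjClass.conj_mem {C : Set G} (hC : IsNontrivialConjClass C) {x : G}
    (hx : x ∈ C) (γ : G) : γ⁻¹ * x * γ ∈ C := by
  obtain ⟨g, -, rfl⟩ := hC
  exact IsConj.trans hx (isConj_iff.mpr ⟨γ⁻¹, by group⟩)

theorem conj_mem_genSystems {m : ℕ} {C : Fin m → Set G}
    (hC : ∀ i, IsNontrivialConjClass (C i)) {σ : Fin m → G} (hσ : σ ∈ GenSystems G m C) (γ : G) :
    (fun i => γ⁻¹ * σ i * γ) ∈ GenSystems G m C := by
  obtain ⟨hmem, hprod, hgen⟩ := hσ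
  have hconj : (fun i => γ⁻¹ * σ i * γ) = MulAut.conj γ⁻¹ ∘ σ := by
    ext i
    simp
  refine ⟨fun i => (hC i).conj_mem (hmem i) γ, ?_, ?_⟩ <;> rw [hconj]
  · rw [← List.map_ofFn, ← map_list_prod, hprod, map_one]
  · rw [Set.range_comp, ← MulEquiv.coe_toMonoidHom, ← MonoidHom.map_closure, hgen]
    exact Subgroup.map_top_of_surjective _ (MulAut.conj γ⁻¹).surjective

theorem append_mem_genSystems {n M : ℕ} {C : Fin n → Set G} {D : Fin M → Set G}
    {σ : Fin n → G} {τ : Fin M → G} (hσ : σ ∈ GenSystems G n C)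
    (hτ : τ ∈ GenSystems G M D) :
    Fin.append σ τ ∈ GenSystems G (n + M) (Fin.append C D) := by
  obtain ⟨hσmem, hσprod, hσgen⟩ := hσ
  obtain ⟨hτmem, hτprod, -⟩ := hτ
  refine ⟨fun i => ?_, ?_, ?_⟩
  · induction i using Fin.addCases with
    | left i => simpa using hσmem i
    | right i => simpa using hτmem i
  · rw [List.ofFn_fin_append, List.prod_append, hσprod, hτprod, one_mul]
  · rw [eq_top_iff, ← hσgen]
    apply Subgroup.closure_mono
    rintro _ ⟨i, rfl⟩
    exact ⟨Fin.castAdd M i, Fin.append_left σ τ i⟩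

theorem mem_center_of_mem_centralizer {s : Set G} (hs : Subgroup.closure s = ⊤) {g : G}
    (hg : g ∈ Subgroup.centralizer s) : g ∈ Subgroup.center G := by
  rwa [← Subgroup.centralizer_univ, ← Subgroup.coe_top, ← hs, Subgroup.centralizer_closure]

theorem eq_of_forall_conj_eq (hZ : Subgroup.center G = ⊥) {m : ℕ} {σ : Fin m → G}
    (hσ : Subgroup.closure (Set.range σ) = ⊤) {γ δ : G}
    (h : ∀ i, γ⁻¹ * σ i * γ = δ⁻¹ * σ i * δ) : γ = δ := by
  have hcomm : δ * γ⁻¹ ∈ Subgroup.centralizer (Set.range σ) := by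
    rw [Subgroup.mem_centralizer_iff]
    rintro _ ⟨i, rfl⟩
    calc σ i * (δ * γ⁻¹) = δ * (δ⁻¹ * σ i * δ) * γ⁻¹ := by group
      _ = δ * (γ⁻¹ * σ i * γ) * γ⁻¹ := by rw [h i]
      _ = δ * γ⁻¹ * σ i := by group
  have hcent := mem_center_of_mem_centralizer hσ hcomm
  rw [hZ, Subgroup.mem_bot, mul_inv_eq_one] at hcent
  exact hcent.symm

theorem card_mul_li_le_li_append [Finite G] (hZ : Subgroup.center G = ⊥) {n M : ℕ}
    {C : Fin n → Set G} {D : Fin M → Set G} (hC : ∀ i, IsNontrivialConjClass (C i))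
    {τ : Fin n → G} (hτ : τ ∈ GenSystems G n C) :
    Nat.card G * li G M D ≤ li G (n + M) (Fin.append C D) := by
  let F : G × Quot (fun σ ρ : GenSystems G M D => SimConjT σ.1 ρ.1) →
      Quot (fun σ ρ : GenSystems G (n + M) (Fin.append C D) => SimConjT σ.1 ρ.1) :=
    fun p => Quot.mk _
      ⟨_, append_mem_genSystems (conj_mem_genSystems hC hτ p.1) (Quot.out p.2).2⟩
  have hF : Function.Injective F := by
    rintro ⟨γ, q⟩ ⟨γ', q'⟩ hFeq
    obtain ⟨δ, hδ⟩ :=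
      ((simConjT_equivalence _).comap Subtype.val).eqvGen_iff.mp (Quot.eqvGen_exact hFeq)
    have hright : ∀ i, δ⁻¹ * (Quot.out q).1 i * δ = (Quot.out q').1 i := fun i => by
      simpa using hδ (Fin.natAdd n i)
    obtain rfl : q = q' := by
      rw [← Quot.out_eq q, ← Quot.out_eq q']
      exact Quot.sound ⟨δ, hright⟩
    obtain rfl : δ = 1 := eq_of_forall_conj_eq hZ (Quot.out q).2.2.2 (by simpa using hright)
    obtain rfl : γ = γ' := eq_of_forall_conj_eq hZ hτ.2.2 fun i => by
      simpa using hδ (Fin.castAdd M i)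
    rfl
  simpa [li, Nat.card_prod] using Nat.card_le_card_of_injective F hF

theorem nonempty_genSystems_of_one_le_li {m : ℕ} {C : Fin m → Set G} (h : 1 ≤ li G m C) :
    (GenSystems G m C).Nonempty := by
  obtain ⟨⟨q⟩, -⟩ := Nat.card_pos_iff.mp h
  exact ⟨(Quot.out q).1, (Quot.out q).2⟩

theorem pow_le_li [Finite G] (hZ : Subgroup.center G = ⊥) {n0 : ℕ}
    (H : ∀ n, n0 ≤ n → n ≤ 2 * n0 - 1 → ∀ D : Fin n → Set G,
      (∀ i, IsNontrivialConjClass (D i)) → 1 ≤ li G n D)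
    (j : ℕ) {N : ℕ} (hlo : j * n0 + n0 ≤ N) (hhi : N ≤ j * n0 + (2 * n0 - 1))
    (C : Fin N → Set G) (hC : ∀ i, IsNontrivialConjClass (C i)) :
    Nat.card G ^ j ≤ li G N C := by
  induction j generalizing N with
  | zero =>
    rw [zero_mul, zero_add] at hlo hhi
    simpa using H N hlo hhi C hC
  | succ j ih =>
    rw [add_one_mul] at hlo hhi
    obtain ⟨M, rfl⟩ : ∃ M, N = n0 + M := ⟨N - n0, by omega⟩
    obtain ⟨⟨C₁, C₂⟩, rfl⟩ := (Fin.appendEquiv n0 M).surjective C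
    have hC₁ (i : Fin n0) : IsNontrivialConjClass (C₁ i) := by simpa using hC (Fin.castAdd M i)
    have hC₂ (i : Fin M) : IsNontrivialConjClass (C₂ i) := by simpa using hC (Fin.natAdd n0 i)
    obtain ⟨τ, hτ⟩ := nonempty_genSystems_of_one_le_li (H n0 le_rfl (by omega) C₁ hC₁)
    calc Nat.card G ^ (j + 1) = Nat.card G * Nat.card G ^ j := pow_succ' _ _
      _ ≤ Nat.card G * li G M C₂ := Nat.mul_le_mul_left _ (ih (by omega) (by omega) C₂ hC₂)
      _ ≤ li G (n0 + M) (Fin.append C₁ C₂) := card_mul_li_le_li_append hZ hC₁ hτ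

end ClassVectors

open ClassVectors in
theorem statement19_general {G : Type*} [Group G] [Finite G]
    (hZ : Subgroup.center G = ⊥)
    (n0 : ℕ)
    (H : ∀ n, n0 ≤ n → n ≤ 2 * n0 - 1 → ∀ D : Fin n → Set G,
      (∀ i, IsNontrivialConjClass (D i)) → 1 ≤ li G n D) :
    ∀ k l : ℕ, 2 ≤ k → l ≤ n0 - 1 →
      ∀ C : Fin (k * n0 + l) → Set G,
        (∀ i, IsNontrivialConjClass (C i)) →
        Nat.card G ^ (k - 1) ≤ li G (k * n0 + l) C := by
  intro k l hk hl C hC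
  obtain ⟨j, rfl⟩ : ∃ j, k = j + 1 := ⟨k - 1, by omega⟩
  rw [Nat.add_sub_cancel]
  exact pow_le_li hZ H j (by rw [add_one_mul]; omega) (by rw [add_one_mul]; omega) C hC

open ClassVectors in
/-- Proposition: if `l^i(D₁,…,D_n) ≥ 1` for all nontrivial class vectors of
length `n` with `n₀ ≤ n ≤ 2n₀ − 1`, then `l^i(C₁,…,C_m) ≥ |G|^{k−1}` for all
nontrivial class vectors of length `m = k·n₀ + l` with `k ≥ 2` and
`0 ≤ l ≤ n₀ − 1`. -/
theorem statement19 {G : Type*} [Group G] [Finite G]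
    (hZ : Subgroup.center G = ⊥)
    (n0 : ℕ) (hn0 : 3 ≤ n0)
    (H : ∀ n, n0 ≤ n → n ≤ 2 * n0 - 1 → ∀ D : Fin n → Set G,
      (∀ i, IsNontrivialConjClass (D i)) → 1 ≤ li G n D) :
    ∀ k l : ℕ, 2 ≤ k → l ≤ n0 - 1 →
      ∀ C : Fin (k * n0 + l) → Set G,
        (∀ i, IsNontrivialConjClass (C i)) →
        Nat.card G ^ (k - 1) ≤ li G (k * n0 + l) C :=
  statement19_general hZ n0 H
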